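/- Let 𝕎 be the space of (a.e.-equivalence classes of) Lebesgue-integrable functions w : ℝ → ℝ vanishing a.e. on (−∞,0); for λ > 0 and H ∈ ℝ let φ_{λ,H} : 𝕎 → 𝕎 be the map (φ_{λ,H} w)(t) := λ^{H−1} w(t/λ). Let γ > 0, H ∈ ℝ, and let ν be a σ-finite Borel measure on 𝕎 which is (γ,H)-scaling (λ^{1+γ} ν(φ_{λ,H}(A)) = ν(A) for all λ > 0 and Borel A) and satisfies: for every x > 0, ∫_{ℝ×𝕎} ( |∫_0^x w(t−u) dt| ∧ |∫_0^x w(t−u) dt|² ) du ν(dw) < ∞. Then for every λ > 0, every m ∈ ℕ, all θ_1,…,θ_m ∈ ℝ and all (x_j, y_j) ∈ (0,∞)² (j = 1,…,m): ∫_{ℝ×(0,∞)×𝕎} Ψ( Σ_{j=1}^m θ_j · 1(v ≤ λ^γ y_j) · ∫_0^{λ x_j} w(t−u) dt ) du dv ν(dw) = ∫_{ℝ×(0,∞)×𝕎} Ψ( λ^H · Σ_{j=1}^m θ_j · 1(v ≤ y_j) · ∫_0^{x_j} w(t−u) dt ) du dv ν(dw), where Ψ(z) := e^{iz} − 1 −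 iz. -/

import Mathlib

open MeasureTheory Filter Set
open scoped ENNReal Topology

noncomputable section

/-- Borel σ-algebra on `L¹(ℝ)`. -/
instance : MeasurableSpace (Lp ℝ 1 (volume : Measure ℝ)) := borel _

/-- `𝕎`: the space of (a.e.-equivalence classes of) Lebesgue-integrable functions
`ℝ → ℝ` vanishing a.e. on `(-∞, 0)`, with the Borel σ-algebra inherited from `L¹(ℝ)`. -/
abbrev WW : Type :=
  {w : Lp ℝ 1 (volume : Measure ℝ) // ∀ᵐ t ∂(volume : Measure ℝ), t < 0 → w t = 0}

/-- The scaling map `φ_{λ,H} w (t) = λ^{H-1} w(t/λ)` on `𝕎`. -/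
noncomputable def phi (lam H : ℝ) (w : WW) : WW := by
  classical
  exact if h : MemLp (fun t => lam ^ (H - 1) * (w.1 : ℝ → ℝ) (t / lam)) 1 (volume : Measure ℝ) ∧
      ∀ᵐ t ∂(volume : Measure ℝ), t < 0 → lam ^ (H - 1) * (w.1 : ℝ → ℝ) (t / lam) = 0
  then ⟨h.1.toLp _, by
    filter_upwards [h.1.coeFn_toLp, h.2] with t h1 h2 ht
    rw [h1]; exact h2 ht⟩
  else ⟨0, by
    filter_upwards [Lp.coeFn_zero ℝ 1 (volume : Measure ℝ)] with t h1 _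
    simp [h1]⟩

/-- `ν` is a `(γ,H)`-scaling measure on `𝕎`:
`λ^{1+γ} ν(φ_{λ,H}(A)) = ν(A)` for every `λ > 0` and Borel `A`. -/
def ScalingMeasure (ν : Measure WW) (γ H : ℝ) : Prop :=
  ∀ lam : ℝ, 0 < lam → ∀ A : Set WW, MeasurableSet A →
    ENNReal.ofReal (lam ^ (1 + γ)) * ν (phi lam H '' A) = ν A

/-- `𝒲(w) = ∫_0^∞ w(t) dt`. -/
noncomputable def Wcal (w : WW) : ℝ := ∫ t in Set.Ioi (0:ℝ), (w.1 : ℝ → ℝ) t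

/-- `Ψ(z) = e^{iz} - 1 - iz`. -/
noncomputable def Psi (z : ℝ) : ℂ := Complex.exp ((z:ℂ) * Complex.I) - 1 - (z:ℂ) * Complex.I

end

/-!
The map `(u, v, w) ↦ (λu, λ^γ v, φ_{λ,H} w)` preserves `du dv ν(dw)` on `ℝ × (0,∞) × 𝕎`:
it scales the first Lebesgue factor by `λ⁻¹`, the second by `λ^{-γ}`, and `ν` by `λ^{1+γ}`
(the scaling property, read through `φ_{λ,H}⁻¹ = φ_{λ⁻¹,H}`). Under this change of variables
`1(λ^γ v ≤ λ^γ y) = 1(v ≤ y)` and `∫_0^{λx} (φ_{λ,H} w)(t - λu) dt = λ^H ∫_0^x w(t - u) dt`,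
which turns the left-hand integrand into the right-hand one.
-/

instance : BorelSpace (Lp ℝ 1 (volume : Measure ℝ)) := ⟨rfl⟩

lemma quasiMeasurePreserving_div_const {c : ℝ} (hc : c ≠ 0) :
    Measure.QuasiMeasurePreserving (· / c) (volume : Measure ℝ) volume := by
  simpa only [smul_eq_mul, div_eq_inv_mul] using
    Measure.quasiMeasurePreserving_smul (volume : Measure ℝ) (inv_ne_zero hc)

section Scaling

variable {lam H : ℝ}

lemma coeFn_phi (hlam : 0 < lam) (w : WW) :
    ((phi lam H w).1 : ℝ → ℝ) =ᵐ[volume] fun t => lam ^ (H - 1) * (w.1 : ℝ → ℝ) (t / lam) := by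
  have h : MemLp (fun t => lam ^ (H - 1) * (w.1 : ℝ → ℝ) (t / lam)) 1 volume ∧
      ∀ᵐ t ∂volume, t < 0 → lam ^ (H - 1) * (w.1 : ℝ → ℝ) (t / lam) = 0 := by
    refine ⟨memLp_one_iff_integrable.2
      (((L1.integrable_coeFn w.1).comp_div hlam.ne').const_mul _), ?_⟩
    filter_upwards [(quasiMeasurePreserving_div_const hlam.ne').ae w.2] with t ht hneg
    rw [ht (div_neg_of_neg_of_pos hneg hlam), mul_zero]
  rw [phi, dif_pos h]
  exact h.1.coeFn_toLp

lemma dist_phi (hlam : 0 < lam) (w v : WW) :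
    dist (phi lam H w) (phi lam H v) = lam ^ H * dist w v := by
  have hdiff : ∀ᵐ t ∂volume, ((phi lam H w).1 - (phi lam H v).1 : Lp ℝ 1 volume) t
      = lam ^ (H - 1) * ((w.1 - v.1 : Lp ℝ 1 volume) : ℝ → ℝ) (t / lam) := by
    filter_upwards [Lp.coeFn_sub (phi lam H w).1 (phi lam H v).1, coeFn_phi hlam w,
      coeFn_phi hlam v, (quasiMeasurePreserving_div_const hlam.ne').ae (Lp.coeFn_sub w.1 v.1)]
      with t h1 h2 h3 h4
    rw [h1, Pi.sub_apply, h2, h3, h4, Pi.sub_apply, mul_sub]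
  rw [Subtype.dist_eq, Subtype.dist_eq, dist_eq_norm, dist_eq_norm, L1.norm_eq_integral_norm,
    L1.norm_eq_integral_norm, integral_congr_ae (hdiff.mono fun t ht => congrArg norm ht)]
  simp only [norm_mul]
  rw [integral_const_mul, Measure.integral_comp_div (fun s => ‖(w.1 - v.1 : Lp ℝ 1 volume) s‖),
    smul_eq_mul, ← mul_assoc, Real.norm_eq_abs, abs_of_pos (by positivity), abs_of_pos hlam,
    Real.rpow_sub_one hlam.ne', div_mul_cancel₀ _ hlam.ne']

lemma continuous_phi (hlam : 0 < lam) : Continuous (phi lam H) :=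
  (LipschitzWith.of_dist_le_mul (K := ⟨lam ^ H, by positivity⟩) fun w v =>
    (dist_phi hlam w v).le).continuous

lemma phi_inv_phi (hlam : 0 < lam) (w : WW) : phi lam⁻¹ H (phi lam H w) = w := by
  refine Subtype.ext (Lp.ext ?_)
  filter_upwards [coeFn_phi (inv_pos.2 hlam) (phi lam H w),
    (quasiMeasurePreserving_div_const (inv_ne_zero hlam.ne')).ae (coeFn_phi (H := H) hlam w)]
    with t h1 h2
  rw [h1, h2, div_div, inv_mul_cancel₀ hlam.ne', div_one, ← mul_assoc,
    ← Real.mul_rpow (inv_pos.2 hlam).le hlam.le, inv_mul_cancel₀ hlam.ne', Real.one_rpow, one_mul]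

lemma intervalIntegral_phi_sub (hlam : 0 < lam) (w : WW) (c u : ℝ) :
    ∫ t in (0:ℝ)..(lam * c), ((phi lam H w).1 : ℝ → ℝ) (t - lam * u)
      = lam ^ H * ∫ t in (0:ℝ)..c, (w.1 : ℝ → ℝ) (t - u) := by
  have h : ∀ᵐ t ∂volume, ((phi lam H w).1 : ℝ → ℝ) (t - lam * u)
      = lam ^ (H - 1) * (w.1 : ℝ → ℝ) (t / lam - u) := by
    filter_upwards [(measurePreserving_sub_right volume (lam * u)).quasiMeasurePreserving.ae
      (coeFn_phi hlam w)] with t ht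
    rw [ht, sub_div, mul_div_cancel_left₀ _ hlam.ne']
  rw [intervalIntegral.integral_congr_ae (h.mono fun t ht _ => ht),
    intervalIntegral.integral_const_mul,
    intervalIntegral.integral_comp_div (fun s => (w.1 : ℝ → ℝ) (s - u)) hlam.ne', zero_div,
    mul_div_cancel_left₀ _ hlam.ne', smul_eq_mul, ← mul_assoc, Real.rpow_sub_one hlam.ne',
    div_mul_cancel₀ _ hlam.ne']

end Scaling

noncomputable def phiEquiv (lam H : ℝ) (hlam : 0 < lam) : WW ≃ᵐ WW where
  toFun := phi lam H
  invFun := phi lam⁻¹ H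
  left_inv := phi_inv_phi hlam
  right_inv w := by simpa only [inv_inv] using phi_inv_phi (inv_pos.2 hlam) w
  measurable_toFun := (continuous_phi hlam).measurable
  measurable_invFun := (continuous_phi (inv_pos.2 hlam)).measurable

lemma ScalingMeasure.map_phi {ν : Measure WW} {γ H lam : ℝ} (hν : ScalingMeasure ν γ H)
    (hlam : 0 < lam) : ν.map (phi lam H) = ENNReal.ofReal (lam ^ (1 + γ)) • ν := by
  ext A hA
  have hpos : 0 < lam ^ (1 + γ) := by positivity
  have h := hν lam⁻¹ (inv_pos.2 hlam) A hA
  rw [Real.inv_rpow hlam.le, ENNReal.ofReal_inv_of_pos hpos] at h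
  rw [show phi lam H = phiEquiv lam H hlam from rfl, MeasurableEquiv.map_apply,
    ← MeasurableEquiv.image_symm, Measure.smul_apply, smul_eq_mul, ← h, ← mul_assoc,
    ENNReal.mul_inv_cancel (ENNReal.ofReal_pos.2 hpos).ne' ENNReal.ofReal_ne_top, one_mul]
  rfl

lemma map_mul_left_volume_restrict_Ioi {c : ℝ} (hc : 0 < c) :
    ((volume : Measure ℝ).restrict (Ioi 0)).map (c * ·)
      = ENNReal.ofReal c⁻¹ • (volume : Measure ℝ).restrict (Ioi 0) := by
  have hpre : (MeasurableEquiv.mulLeft₀ c hc.ne') ⁻¹' Ioi 0 = Ioi 0 := by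
    ext v
    simp [mul_pos_iff_of_pos_left hc]
  have h := (MeasurableEquiv.mulLeft₀ c hc.ne').restrict_map volume (Ioi 0)
  rw [hpre, MeasurableEquiv.coe_mulLeft₀, Real.map_volume_mul_left hc.ne',
    Measure.restrict_smul, abs_of_pos (inv_pos.2 hc)] at h
  exact h.symm

noncomputable def scalingEquiv (lam γ H : ℝ) (hlam : 0 < lam) : ℝ × ℝ × WW ≃ᵐ ℝ × ℝ × WW :=
  (MeasurableEquiv.mulLeft₀ lam hlam.ne').prodCongr
    ((MeasurableEquiv.mulLeft₀ (lam ^ γ) (by positivity)).prodCongr (phiEquiv lam H hlam))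

lemma measurePreserving_scalingEquiv {ν : Measure WW} [SigmaFinite ν] {γ H lam : ℝ}
    (hν : ScalingMeasure ν γ H) (hlam : 0 < lam) :
    MeasurePreserving (scalingEquiv lam γ H hlam)
      ((volume : Measure ℝ).prod (((volume : Measure ℝ).restrict (Ioi 0)).prod ν))
      ((volume : Measure ℝ).prod (((volume : Measure ℝ).restrict (Ioi 0)).prod ν)) := by
  refine ⟨(scalingEquiv lam γ H hlam).measurable, ?_⟩
  have hlamγ : 0 < lam ^ γ := by positivity
  have hone : ENNReal.ofReal |lam⁻¹| * ENNReal.ofReal (lam ^ (1 + γ))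
      * ENNReal.ofReal (lam ^ γ)⁻¹ = 1 := by
    rw [← ENNReal.ofReal_mul (abs_nonneg _), ← ENNReal.ofReal_mul (by positivity),
      abs_of_pos (inv_pos.2 hlam), Real.rpow_add hlam, Real.rpow_one]
    field_simp
    exact ENNReal.ofReal_one
  change Measure.map (Prod.map (lam * ·) (Prod.map (lam ^ γ * ·) (phi lam H))) _ = _
  have hphi := (continuous_phi (H := H) hlam).measurable
  rw [← Measure.map_prod_map _ _ (by fun_prop) ((measurable_const_mul _).prodMap hphi),
    ← Measure.map_prod_map _ _ (by fun_prop) hphi,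
    Real.map_volume_mul_left hlam.ne', map_mul_left_volume_restrict_Ioi hlamγ, hν.map_phi hlam,
    Measure.prod_smul_right, Measure.prod_smul_left, Measure.prod_smul_right, smul_smul,
    Measure.prod_smul_left, Measure.prod_smul_right, smul_smul, hone, one_smul]

theorem stmt_14_general (γ H : ℝ)
    (ν : Measure WW) [SigmaFinite ν] (hscal : ScalingMeasure ν γ H)
    (lam : ℝ) (hlam : 0 < lam) (m : ℕ) (θ x y : Fin m → ℝ) :
    ∫ p : ℝ × ℝ × WW,
        Psi (∑ j : Fin m, θ j * (if p.2.1 ≤ lam ^ γ * y j then (1:ℝ) else 0) *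
          ∫ t in (0:ℝ)..(lam * x j), (p.2.2.1 : ℝ → ℝ) (t - p.1))
        ∂((volume : Measure ℝ).prod (((volume : Measure ℝ).restrict (Set.Ioi 0)).prod ν)) =
      ∫ p : ℝ × ℝ × WW,
        Psi (lam ^ H * ∑ j : Fin m, θ j * (if p.2.1 ≤ y j then (1:ℝ) else 0) *
          ∫ t in (0:ℝ)..(x j), (p.2.2.1 : ℝ → ℝ) (t - p.1))
        ∂((volume : Measure ℝ).prod (((volume : Measure ℝ).restrict (Set.Ioi 0)).prod ν)) := by
  have hlamγ : 0 < lam ^ γ := by positivity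
  refine ((measurePreserving_scalingEquiv hscal hlam).integral_comp' _).symm.trans
    (integral_congr_ae (ae_of_all _ ?_))
  rintro ⟨u, v, w⟩
  change Psi (∑ j, θ j * (if lam ^ γ * v ≤ lam ^ γ * y j then (1:ℝ) else 0) *
    ∫ t in (0:ℝ)..(lam * x j), ((phi lam H w).1 : ℝ → ℝ) (t - lam * u)) = _
  simp only [mul_le_mul_iff_right₀ hlamγ, intervalIntegral_phi_sub hlam, Finset.mul_sum]
  congr 1
  exact Finset.sum_congr rfl fun j _ => by ring

/-- characteristic-exponent form of `(γ,H)`-self-similarity of `J_ν`.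
If `ν` is a `(γ,H)`-scaling σ-finite measure on `𝕎` with `γ > 0` satisfying the basic
integrability condition, then for every `λ > 0`, `m`, `θ_j ∈ ℝ`, `(x_j, y_j) ∈ (0,∞)²`:
`∫ Ψ(Σ_j θ_j 1(v ≤ λ^γ y_j) ∫_0^{λ x_j} w(t-u) dt) du dv ν(dw)
  = ∫ Ψ(λ^H Σ_j θ_j 1(v ≤ y_j) ∫_0^{x_j} w(t-u) dt) du dv ν(dw)`. -/
theorem stmt_14 (γ H : ℝ) (hγ : 0 < γ)
    (ν : Measure WW) [SigmaFinite ν] (hscal : ScalingMeasure ν γ H)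
    (hcru : ∀ x : ℝ, 0 < x →
      (∫⁻ p : ℝ × WW,
        ENNReal.ofReal (min |∫ t in (0:ℝ)..x, (p.2.1 : ℝ → ℝ) (t - p.1)|
          (|∫ t in (0:ℝ)..x, (p.2.1 : ℝ → ℝ) (t - p.1)| ^ 2))
        ∂((volume : Measure ℝ).prod ν)) ≠ ⊤)
    (lam : ℝ) (hlam : 0 < lam) (m : ℕ) (θ x y : Fin m → ℝ)
    (hx : ∀ j, 0 < x j) (hy : ∀ j, 0 < y j) :
    ∫ p : ℝ × ℝ × WW,
        Psi (∑ j : Fin m, θ j * (if p.2.1 ≤ lam ^ γ * y j then (1:ℝ) else 0) *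
          ∫ t in (0:ℝ)..(lam * x j), (p.2.2.1 : ℝ → ℝ) (t - p.1))
        ∂((volume : Measure ℝ).prod (((volume : Measure ℝ).restrict (Set.Ioi 0)).prod ν)) =
      ∫ p : ℝ × ℝ × WW,
        Psi (lam ^ H * ∑ j : Fin m, θ j * (if p.2.1 ≤ y j then (1:ℝ) else 0) *
          ∫ t in (0:ℝ)..(x j), (p.2.2.1 : ℝ → ℝ) (t - p.1))
        ∂((volume : Measure ℝ).prod (((volume : Measure ℝ).restrict (Set.Ioi 0)).prod ν)) :=
  stmt_14_general γ H ν hscal lam hlam m θ x y
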